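/- arXiv:1507.08129 — 2 statements merged into one kernel-verified Lean document; each statement's English description precedes it below -/
import Mathlib

section
/- Let A be a commutative ring and f, g ∈ A non-zero-divisors, and N a cochain complex of A-modules, supported in non-negative degrees, all of whose terms are (fg)-torsion-free. Then η_{fg} N = η_f (η_g N) as subcomplexes of N, where (η_h N)^n := {x ∈ h^n N^n : d x ∈ h^{n+1} N^{n+1}}. -/
/-- Let `A` be a commutative ring, `f, g ∈ A` non-zero-divisors, and `N`
a cochain complex of `(f*g)`-torsion-free `A`-modules in non-negative degrees.  Then
`η_{fg} N = η_f (η_g N)` as subcomplexes of `N`, where for a non-zero-divisor `h` we set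
`(η_h N)^n = {x ∈ hⁿ Nⁿ : d x ∈ h^{n+1} N^{n+1}}`; applying `η_f` to the subcomplex
`η_g N` means: `x` lies in `fⁿ · (η_g N)ⁿ` and `d x` lies in `f^{n+1} · (η_g N)^{n+1}`. -/
theorem eta_mul_eq_eta_comp
    {A : Type*} [CommRing A] (f g : A)
    (hf : f ∈ nonZeroDivisors A) (hg : g ∈ nonZeroDivisors A)
    (N : ℕ → Type*) [∀ n, AddCommGroup (N n)] [∀ n, Module A (N n)]
    (d : ∀ n, N n →ₗ[A] N (n + 1))
    (hdd : ∀ n (x : N n), d (n + 1) (d n x) = 0)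
    (htf : ∀ n (x : N n), (f * g) • x = 0 → x = 0)
    -- `η_h N` in degree `n`, for a scalar `h : A`:
    (eta : A → ∀ n, Set (N n))
    (heta : ∀ (h : A) n, eta h n =
      {x : N n | (∃ y : N n, x = h ^ n • y) ∧ ∃ z : N (n + 1), d n x = h ^ (n + 1) • z}) :
    ∀ n, eta (f * g) n =
      {x : N n | (∃ y ∈ eta g n, x = f ^ n • y) ∧
        ∃ z ∈ eta g (n + 1), d n x = f ^ (n + 1) • z} := by
  -- cancellation of powers of f*g
  have hfg : ∀ (m : ℕ) n (x : N n), (f * g) ^ m • x = 0 → x = 0 := by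
    intro m
    induction m with
    | zero => intro n x h; simpa using h
    | succ k ih =>
      intro n x h
      refine ih n x (htf n _ ?_)
      rw [smul_smul, ← pow_succ']
      exact h
  -- cancellation of powers of f
  have hfcan : ∀ (m : ℕ) n (x : N n), f ^ m • x = 0 → x = 0 := by
    intro m n x h
    refine hfg m n x ?_
    have : (f * g) ^ m • x = g ^ m • (f ^ m • x) := by
      rw [smul_smul, mul_pow, mul_comm]
    rw [this, h, smul_zero]
  intro n
  ext x
  simp only [heta, Set.mem_setOf_eq]
  constructor
  · rintro ⟨⟨y0, hy0⟩, z0, hz0⟩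
    have h1 : f ^ n • d n (g ^ n • y0) = f ^ n • ((g ^ (n + 1) * f) • z0) := by
      calc f ^ n • d n (g ^ n • y0) = (f * g) ^ n • d n y0 := by
            rw [map_smul, smul_smul, mul_pow]
        _ = d n x := by rw [hy0, map_smul]
        _ = (f * g) ^ (n + 1) • z0 := hz0
        _ = f ^ n • ((g ^ (n + 1) * f) • z0) := by rw [smul_smul]; congr 1; ring
    have h2 : d n (g ^ n • y0) = (g ^ (n + 1) * f) • z0 := by
      have h0 : f ^ n • (d n (g ^ n • y0) - (g ^ (n + 1) * f) • z0) = 0 := by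
        rw [smul_sub, h1, sub_self]
      exact sub_eq_zero.mp (hfcan n (n + 1) _ h0)
    have h3 : d (n + 1) (g ^ (n + 1) • z0) = 0 := by
      refine hfcan (n + 1) (n + 1 + 1) _ ?_
      rw [map_smul, smul_smul, ← mul_pow, ← map_smul, ← hz0, hdd]
    refine ⟨⟨g ^ n • y0, ⟨⟨y0, rfl⟩, f • z0, ?_⟩, ?_⟩,
      g ^ (n + 1) • z0, ⟨⟨z0, rfl⟩, 0, by rw [h3, smul_zero]⟩, ?_⟩
    · rw [h2, smul_smul]
    · rw [hy0, mul_pow, smul_smul]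
    · rw [hz0, mul_pow, smul_smul]
  · rintro ⟨⟨y, ⟨⟨u, hu⟩, _⟩, hxy⟩, z, ⟨⟨w, hw⟩, _⟩, hxz⟩
    refine ⟨⟨u, ?_⟩, w, ?_⟩
    · rw [hxy, hu, smul_smul, ← mul_pow]
    · rw [hxz, hw, smul_smul, ← mul_pow]
end

section
/- Let A be a commutative ring, f ∈ A a non-zero-divisor, and N a cochain complex of f-torsion-free A-modules in degrees ≥ 0. If the cohomology H^n(N) is f-torsion-free for all n, then the inclusion η_f N ↪ N induces an isomorphism H^n(η_f N) ≅ f^n · H^n(N) ≅ H^n(N) for all n; in particular η_f N ↪ N is a quasi-isomorphism up to the isomorphisms given by multiplication by f^n in each degree. -/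
/-!
Multiplication by `f ^ n` maps the cycles of `N` onto the cycles of `η_f N`: a cycle of `η_f N`
is `f ^ n • y`, and `y` is a cycle because `N` is `f`-torsion-free. It sends a boundary `d u` to
the boundary `d (f ^ n • u)` of `η_f N`. Conversely, if `f ^ n • y = d w` with
`w = f ^ (n - 1) • u` in `η_f N`, torsion-freeness gives `f • y = d u`, so the class of `y` is
`f`-torsion in `H^n(N)`, hence zero. So `[y] ↦ [f ^ n • y]` is an isomorphism
`H^n(N) ≅ H^n(η_f N)`, and its inverse divides by `f ^ n`.
-/

abbrev Homol {K : Type*} [CommRing K] {M1 M2 M3 : Type*}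
    [AddCommGroup M1] [AddCommGroup M2] [AddCommGroup M3]
    [Module K M1] [Module K M2] [Module K M3]
    (D1 : M1 →ₗ[K] M2) (D2 : M2 →ₗ[K] M3) :=
  LinearMap.ker D2 ⧸ (LinearMap.range D1).comap (LinearMap.ker D2).subtype

open LinearMap Submodule

section KernelOfRestriction

variable {R M M' : Type*} [Semiring R] [AddCommMonoid M] [AddCommMonoid M'] [Module R M]
  [Module R M'] {P : Submodule R M} {P' : Submodule R M'}

theorem ker_eq_comap_subtype_of_coe_apply {D : M →ₗ[R] M'} {D' : P →ₗ[R] P'}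
    (hD : ∀ x, (D' x : M') = D x) : ker D' = (ker D).comap P.subtype := by
  ext x
  simp only [mem_ker, mem_comap, subtype_apply, ← hD, ZeroMemClass.coe_eq_zero]

def kerEquivKerOfLE {D : M →ₗ[R] M'} {D' : P →ₗ[R] P'} (hD : ∀ x, (D' x : M') = D x)
    (hle : ker D ≤ P) : ker D' ≃ₗ[R] ker D :=
  (LinearEquiv.ofEq _ _ (ker_eq_comap_subtype_of_coe_apply hD)).trans
    (comapSubtypeEquivOfLe hle)

end KernelOfRestriction

section Decalage

variable {A : Type*} [CommRing A] {f : A} {N : ℕ → Type*} [∀ n, AddCommGroup (N n)]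
  [∀ n, Module A (N n)] {d : ∀ n, N n →ₗ[A] N (n + 1)} {eta : ∀ n, Submodule A (N n)}

/-- `eta` is the décalage `η_f N` of the complex `(N, d)`. -/
def IsDecalage (f : A) (d : ∀ n, N n →ₗ[A] N (n + 1)) (eta : ∀ n, Submodule A (N n)) :
    Prop :=
  ∀ n (x : N n), x ∈ eta n ↔
    (∃ y : N n, x = f ^ n • y) ∧ ∃ z : N (n + 1), d n x = f ^ (n + 1) • z

namespace IsDecalage

theorem pow_smul_mem_of_mem_ker (heta : IsDecalage f d eta) {n : ℕ} {y : N n}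
    (hy : y ∈ ker (d n)) : f ^ n • y ∈ eta n :=
  (heta n _).2 ⟨⟨y, rfl⟩, 0, by rw [map_smul, mem_ker.1 hy, smul_zero, smul_zero]⟩

theorem ker_le_zero (heta : IsDecalage f d eta) : ker (d 0) ≤ eta 0 := fun y hy => by
  simpa using heta.pow_smul_mem_of_mem_ker hy

theorem pow_succ_smul_mem (heta : IsDecalage f d eta) {n : ℕ} (u : N n) :
    f ^ (n + 1) • u ∈ eta n :=
  (heta n _).2 ⟨⟨f • u, by rw [pow_succ, mul_smul]⟩, d n u, map_smul _ _ _⟩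

theorem exists_eq_pow_smul_of_mem_ker (heta : IsDecalage f d eta) {n : ℕ}
    (htf : IsSMulRegular (N (n + 1)) f) {x : N n} (hx : x ∈ eta n) (hdx : x ∈ ker (d n)) :
    ∃ y ∈ ker (d n), x = f ^ n • y := by
  obtain ⟨⟨y, rfl⟩, -⟩ := (heta n x).1 hx
  refine ⟨y, mem_ker.2 <| (htf.pow n).right_eq_zero_of_smul ?_, rfl⟩
  rw [← map_smul, mem_ker.1 hdx]

theorem exists_d_eq_smul (heta : IsDecalage f d eta) {n : ℕ} (htf : IsSMulRegular (N (n + 1)) f)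
    {w : N n} (hw : w ∈ eta n) {y : N (n + 1)} (hwy : d n w = f ^ (n + 1) • y) :
    ∃ u, d n u = f • y := by
  obtain ⟨⟨u, rfl⟩, -⟩ := (heta n w).1 hw
  refine ⟨u, htf.pow n ?_⟩
  simp only [← map_smul, hwy, pow_succ, mul_smul]

end IsDecalage

variable {dres : ∀ n, eta n →ₗ[A] eta (n + 1)}

def kerPowSMul (heta : IsDecalage f d eta)
    (hdres : ∀ n (x : eta n), (dres n x : N (n + 1)) = d n x)
    (n : ℕ) : ker (d n) →ₗ[A] ker (dres n) :=
  ((f ^ n • (ker (d n)).subtype).codRestrict (eta n) fun y =>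
    heta.pow_smul_mem_of_mem_ker y.2).codRestrict (ker (dres n)) fun y => by
      rw [mem_ker, ← Subtype.coe_inj, hdres]
      simp [mem_ker.1 y.2]

theorem kerPowSMul_surjective (heta : IsDecalage f d eta)
    (hdres : ∀ n (x : eta n), (dres n x : N (n + 1)) = d n x) {n : ℕ}
    (htf : IsSMulRegular (N (n + 1)) f) : Function.Surjective (kerPowSMul heta hdres n) := by
  rintro ⟨⟨x, hx⟩, hk⟩
  have hdx : x ∈ ker (d n) := by
    rw [mem_ker, ← hdres n ⟨x, hx⟩, mem_ker.1 hk, ZeroMemClass.coe_zero]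
  obtain ⟨y, hy, rfl⟩ := heta.exists_eq_pow_smul_of_mem_ker htf hx hdx
  exact ⟨⟨y, hy⟩, rfl⟩

theorem range_comap_le_comap_kerPowSMul (heta : IsDecalage f d eta)
    (hdres : ∀ n (x : eta n), (dres n x : N (n + 1)) = d n x) (n : ℕ) :
    (range (d n)).comap (ker (d (n + 1))).subtype ≤
      ((range (dres n)).comap (ker (dres (n + 1))).subtype).comap
        (kerPowSMul heta hdres (n + 1)) := by
  rintro y ⟨u, hu⟩
  refine ⟨⟨f ^ (n + 1) • u, heta.pow_succ_smul_mem u⟩, Subtype.ext ?_⟩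
  rw [hdres, map_smul, hu]
  rfl

def homolPowSMul (heta : IsDecalage f d eta)
    (hdres : ∀ n (x : eta n), (dres n x : N (n + 1)) = d n x) (n : ℕ) :
    Homol (d n) (d (n + 1)) →ₗ[A] Homol (dres n) (dres (n + 1)) :=
  mapQ _ _ (kerPowSMul heta hdres (n + 1)) (range_comap_le_comap_kerPowSMul heta hdres n)

theorem homolPowSMul_injective (heta : IsDecalage f d eta)
    (hdres : ∀ n (x : eta n), (dres n x : N (n + 1)) = d n x) {n : ℕ}
    (htf : IsSMulRegular (N (n + 1)) f) (hH : IsSMulRegular (Homol (d n) (d (n + 1))) f) :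
    Function.Injective (homolPowSMul heta hdres n) := by
  rw [injective_iff_map_eq_zero]
  intro c hc
  induction c using Quotient.induction_on with | _ y
  obtain ⟨w, hw⟩ := (Quotient.mk_eq_zero _).1 hc
  have hwy : d n w = f ^ (n + 1) • (y : N (n + 1)) := by
    rw [← hdres, hw]
    rfl
  obtain ⟨u, hu⟩ := heta.exists_d_eq_smul htf w.2 hwy
  refine hH.right_eq_zero_of_smul ?_
  rw [← Quotient.mk_smul, Quotient.mk_eq_zero]
  exact ⟨u, hu⟩

theorem homolPowSMul_surjective (heta : IsDecalage f d eta)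
    (hdres : ∀ n (x : eta n), (dres n x : N (n + 1)) = d n x) {n : ℕ}
    (htf : IsSMulRegular (N (n + 2)) f) : Function.Surjective (homolPowSMul heta hdres n) := by
  intro c
  induction c using Quotient.induction_on with | _ z
  obtain ⟨y, rfl⟩ := kerPowSMul_surjective heta hdres htf z
  exact ⟨Submodule.Quotient.mk y, rfl⟩

end Decalage

theorem eta_quasi_iso_of_torsionFree_cohomology_general
    {A : Type*} [CommRing A] (f : A)
    (N : ℕ → Type*) [∀ n, AddCommGroup (N n)] [∀ n, Module A (N n)]
    (d : ∀ n, N n →ₗ[A] N (n + 1))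
    (htf : ∀ n (x : N n), f • x = 0 → x = 0)
    (eta : ∀ n, Submodule A (N n))
    (heta : ∀ n (x : N n), x ∈ eta n ↔
      (∃ y : N n, x = f ^ n • y) ∧ ∃ z : N (n + 1), d n x = f ^ (n + 1) • z)
    -- the differential of `N` restricted to the subcomplex `η_f N`
    (dres : ∀ n, eta n →ₗ[A] eta (n + 1))
    (hdres : ∀ n (x : eta n), (dres n x : N (n + 1)) = d n (x : N n))
    -- `f`-torsion-freeness of the cohomology of `N`
    (hH : ∀ n (x : Homol (d n) (d (n + 1))), f • x = 0 → x = 0) :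
    (∃ e0 : LinearMap.ker (dres 0) ≃ₗ[A] LinearMap.ker (d 0),
      ∀ (x : N 0) (hx : x ∈ eta 0) (hk : (⟨x, hx⟩ : eta 0) ∈ LinearMap.ker (dres 0))
        (hk' : x ∈ LinearMap.ker (d 0)),
        e0 ⟨⟨x, hx⟩, hk⟩ = ⟨x, hk'⟩) ∧
    ∀ n, ∃ e : Homol (dres n) (dres (n + 1)) ≃ₗ[A] Homol (d n) (d (n + 1)),
      ∀ (y : N (n + 1)) (h1 : f ^ (n + 1) • y ∈ eta (n + 1))
        (hk : (⟨f ^ (n + 1) • y, h1⟩ : eta (n + 1)) ∈ LinearMap.ker (dres (n + 1)))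
        (hk' : y ∈ LinearMap.ker (d (n + 1))),
        e (Submodule.Quotient.mk ⟨⟨f ^ (n + 1) • y, h1⟩, hk⟩) =
          Submodule.Quotient.mk ⟨y, hk'⟩ := by
  have hdec : IsDecalage f d eta := heta
  have hreg : ∀ n, IsSMulRegular (N n) f := fun n => .of_right_eq_zero_of_smul (htf n)
  refine ⟨⟨kerEquivKerOfLE (hdres 0) hdec.ker_le_zero, fun _ _ _ _ => rfl⟩, fun n => ?_⟩
  have hbij : Function.Bijective (homolPowSMul hdec hdres n) :=
    ⟨homolPowSMul_injective hdec hdres (hreg _) (.of_right_eq_zero_of_smul (hH n)),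
      homolPowSMul_surjective hdec hdres (hreg _)⟩
  exact ⟨(LinearEquiv.ofBijective _ hbij).symm,
    fun _ _ _ _ => (LinearEquiv.symm_apply_eq _).2 rfl⟩

/-- Let `A` be a commutative ring, `f ∈ A` a non-zero-divisor, and `N` a
cochain complex of `f`-torsion-free `A`-modules in degrees `≥ 0`.  If `H^n(N)` is
`f`-torsion-free for all `n`, then the inclusion `η_f N ↪ N` induces an isomorphism
`H^n(η_f N) ≅ H^n(N)` for all `n`, given on classes by dividing by `f^n`
(`[f^n·y] ↦ [y]`).  (`H^0` is the kernel of the first differential, and `H^{n+1}` is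
`ker/im` at degree `n+1`.) -/
theorem eta_quasi_iso_of_torsionFree_cohomology
    {A : Type*} [CommRing A] (f : A) (hf : f ∈ nonZeroDivisors A)
    (N : ℕ → Type*) [∀ n, AddCommGroup (N n)] [∀ n, Module A (N n)]
    (d : ∀ n, N n →ₗ[A] N (n + 1))
    (hdd : ∀ n (x : N n), d (n + 1) (d n x) = 0)
    (htf : ∀ n (x : N n), f • x = 0 → x = 0)
    (eta : ∀ n, Submodule A (N n))
    (heta : ∀ n (x : N n), x ∈ eta n ↔
      (∃ y : N n, x = f ^ n • y) ∧ ∃ z : N (n + 1), d n x = f ^ (n + 1) • z)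
    -- the differential of `N` restricted to the subcomplex `η_f N`
    (dres : ∀ n, eta n →ₗ[A] eta (n + 1))
    (hdres : ∀ n (x : eta n), (dres n x : N (n + 1)) = d n (x : N n))
    -- `f`-torsion-freeness of the cohomology of `N`
    (hH0 : ∀ x : LinearMap.ker (d 0), f • x = 0 → x = 0)
    (hH : ∀ n (x : Homol (d n) (d (n + 1))), f • x = 0 → x = 0) :
    (∃ e0 : LinearMap.ker (dres 0) ≃ₗ[A] LinearMap.ker (d 0),
      ∀ (x : N 0) (hx : x ∈ eta 0) (hk : (⟨x, hx⟩ : eta 0) ∈ LinearMap.ker (dres 0))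
        (hk' : x ∈ LinearMap.ker (d 0)),
        e0 ⟨⟨x, hx⟩, hk⟩ = ⟨x, hk'⟩) ∧
    ∀ n, ∃ e : Homol (dres n) (dres (n + 1)) ≃ₗ[A] Homol (d n) (d (n + 1)),
      ∀ (y : N (n + 1)) (h1 : f ^ (n + 1) • y ∈ eta (n + 1))
        (hk : (⟨f ^ (n + 1) • y, h1⟩ : eta (n + 1)) ∈ LinearMap.ker (dres (n + 1)))
        (hk' : y ∈ LinearMap.ker (d (n + 1))),
        e (Submodule.Quotient.mk ⟨⟨f ^ (n + 1) • y, h1⟩, hk⟩) =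
          Submodule.Quotient.mk ⟨y, hk'⟩ :=
  eta_quasi_iso_of_torsionFree_cohomology_general f N d htf eta heta dres hdres hH
end
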